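/- arXiv:1802.07655 — 2 statements merged into one kernel-verified Lean document; each statement's English description precedes it below -/
import Mathlib

section
/- Let x, y ∈ ℂ with Im(x) > 0 and Im(y) > 0, and suppose x+y and 1-x+y avoid the poles of Γ. Define Λ(x,y) = Γ(x+y)·e^y / (y^{x+y-1/2}·√(2π)) using the principal branch of log, and for y with Im(y) > 0 define (-y)^z = exp(z·(Log y - πi)). Then Λ(x, -y)·Λ(1-x, y) = (1 - e^{-2πi(x-y)})^{-1}. -/
open Complex

/-- `Λ(x,y) = Γ(x+y)·e^y / (y^{x+y-1/2}·√(2π))` with principal branch powers. -/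
noncomputable def Lam (x y : ℂ) : ℂ :=
  Complex.Gamma (x + y) * Complex.exp y /
    (y ^ (x + y - 1/2) * (Real.sqrt (2 * Real.pi) : ℂ))

/-- `Λ(x,-y)` where for `Im y > 0` the power `(-y)^z` is interpreted as
`exp(z·(Log y - πi))`. -/
noncomputable def LamNegUpper (x y : ℂ) : ℂ :=
  Complex.Gamma (x - y) * Complex.exp (-y) /
    (Complex.exp ((x - y - 1/2) * (Complex.log y - Real.pi * Complex.I)) *
      (Real.sqrt (2 * Real.pi) : ℂ))

/-- For `Im x > 0`, `Im y > 0`, away from poles of `Γ`: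
`Λ(x,-y)·Λ(1-x,y) = (1 - e^{-2πi(x-y)})⁻¹`. -/
theorem stmt1 (x y : ℂ) (hx : 0 < x.im) (hy : 0 < y.im)
    (h1 : ∀ n : ℕ, x - y ≠ -n) (h2 : ∀ n : ℕ, 1 - x + y ≠ -n) :
    LamNegUpper x y * Lam (1 - x) y =
      (1 - Complex.exp (-(2 * Real.pi * Complex.I) * (x - y)))⁻¹ := by
  have hy0 : y ≠ 0 := by
    intro h; rw [h] at hy; simp at hy
  have hz : ∀ k : ℤ, x - y ≠ (k : ℂ) := by
    intro k hk
    have hpi : (Real.pi : ℂ) ≠ 0 := by exact_mod_cast Real.pi_ne_zero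
    rcases le_or_gt 1 k with hk1 | hk1
    · refine h2 (k - 1).toNat ?_
      have hcast : (((k - 1).toNat : ℕ) : ℂ) = (k : ℂ) - 1 := by
        have h0 : (((k - 1).toNat : ℕ) : ℤ) = k - 1 := Int.toNat_of_nonneg (by omega)
        exact_mod_cast h0
      rw [hcast]
      linear_combination -hk
    · refine h1 (-k).toNat ?_
      have hcast : (((-k).toNat : ℕ) : ℂ) = -(k : ℂ) := by
        have h0 : (((-k).toNat : ℕ) : ℤ) = -k := Int.toNat_of_nonneg (by omega)
        exact_mod_cast h0
      rw [hcast]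
      linear_combination hk
  have hpi : (Real.pi : ℂ) ≠ 0 := by exact_mod_cast Real.pi_ne_zero
  have hsin : Complex.sin ((Real.pi : ℂ) * (x - y)) ≠ 0 := by
    rw [Ne, Complex.sin_eq_zero_iff]
    rintro ⟨k, hk⟩
    exact hz k (mul_left_cancel₀ hpi (by linear_combination hk))
  have hne : 1 - Complex.exp (-(2 * Real.pi * Complex.I) * (x - y)) ≠ 0 := by
    rw [sub_ne_zero]
    intro h
    rw [eq_comm, Complex.exp_eq_one_iff] at h
    obtain ⟨n, hn⟩ := h
    refine hz (-n) ?_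
    have hI : (2 : ℂ) * Real.pi * Complex.I ≠ 0 := by
      simp [Complex.I_ne_zero, Real.pi_ne_zero]
    have h' : (x - y) * (2 * (Real.pi:ℂ) * Complex.I)
        = (-(n:ℂ)) * (2 * Real.pi * Complex.I) := by linear_combination -hn
    have := mul_right_cancel₀ hI h'
    push_cast
    linear_combination this
  have hI2 : Complex.exp ((Real.pi : ℂ)/2 * Complex.I) = Complex.I := by
    rw [Complex.exp_mul_I,
      show ((Real.pi:ℂ)/2) = ((Real.pi/2 : ℝ) : ℂ) from by push_cast; ring,
      ← Complex.ofReal_cos, ← Complex.ofReal_sin, Real.cos_pi_div_two, Real.sin_pi_div_two]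
    simp
  have hss : ((Real.sqrt (2 * Real.pi) : ℝ) : ℂ) * ((Real.sqrt (2 * Real.pi) : ℝ) : ℂ)
      = 2 * (Real.pi : ℂ) := by
    rw [← Complex.ofReal_mul, Real.mul_self_sqrt (by positivity)]; push_cast; ring
  rw [inv_eq_one_div, eq_div_iff hne]
  unfold LamNegUpper Lam
  rw [show (1:ℂ) - x + y = 1 - (x - y) from by ring]
  rw [Complex.cpow_def_of_ne_zero hy0]
  rw [div_mul_div_comm]
  have hnum : Complex.Gamma (x - y) * Complex.exp (-y)
      * (Complex.Gamma (1 - (x - y)) * Complex.exp y)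
      = (Real.pi : ℂ) / Complex.sin ((Real.pi : ℂ) * (x - y)) := by
    rw [show Complex.Gamma (x - y) * Complex.exp (-y)
        * (Complex.Gamma (1 - (x - y)) * Complex.exp y)
        = Complex.Gamma (x - y) * Complex.Gamma (1 - (x - y))
          * (Complex.exp (-y) * Complex.exp y) from by ring,
      ← Complex.exp_add, neg_add_cancel, Complex.exp_zero, mul_one,
      Complex.Gamma_mul_Gamma_one_sub]
  have hden : Complex.exp ((x - y - 1/2) * (Complex.log y - Real.pi * Complex.I))
        * (Real.sqrt (2 * Real.pi) : ℂ)
        * (Complex.exp (Complex.log y * (1 - (x - y) - 1/2)) * (Real.sqrt (2 * Real.pi) : ℂ))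
      = 2 * (Real.pi : ℂ) * (Complex.I * Complex.exp (-((Real.pi : ℂ) * Complex.I) * (x - y))) := by
    calc Complex.exp ((x - y - 1/2) * (Complex.log y - Real.pi * Complex.I))
          * (Real.sqrt (2 * Real.pi) : ℂ)
          * (Complex.exp (Complex.log y * (1 - (x - y) - 1/2)) * (Real.sqrt (2 * Real.pi) : ℂ))
        = Complex.exp ((x - y - 1/2) * (Complex.log y - Real.pi * Complex.I)
            + Complex.log y * (1 - (x - y) - 1/2))
          * (((Real.sqrt (2 * Real.pi) : ℝ) : ℂ) * ((Real.sqrt (2 * Real.pi) : ℝ) : ℂ)) := by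
          rw [Complex.exp_add]; ring
      _ = Complex.exp ((Real.pi : ℂ)/2 * Complex.I + -((Real.pi : ℂ) * Complex.I) * (x - y))
          * (2 * (Real.pi : ℂ)) := by
          rw [hss, show (x - y - 1/2) * (Complex.log y - Real.pi * Complex.I)
            + Complex.log y * (1 - (x - y) - 1/2)
            = (Real.pi : ℂ)/2 * Complex.I + -((Real.pi : ℂ) * Complex.I) * (x - y) from by ring]
      _ = 2 * (Real.pi : ℂ) * (Complex.I * Complex.exp (-((Real.pi : ℂ) * Complex.I) * (x - y))) := by
          rw [Complex.exp_add, hI2]; ring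
  rw [hnum, hden]
  have hden0 : Complex.sin ((Real.pi : ℂ) * (x - y))
      * (2 * (Real.pi : ℂ) * (Complex.I * Complex.exp (-((Real.pi : ℂ) * Complex.I) * (x - y)))) ≠ 0 := by
    apply mul_ne_zero hsin
    apply mul_ne_zero (by simp [Real.pi_ne_zero])
    exact mul_ne_zero Complex.I_ne_zero (Complex.exp_ne_zero _)
  rw [div_div, div_mul_eq_mul_div, div_eq_one_iff_eq hden0]
  rw [Complex.sin,
    show -((Real.pi : ℂ) * (x - y)) * Complex.I = -((Real.pi : ℂ) * Complex.I) * (x - y) from by ring,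
    show ((Real.pi : ℂ) * (x - y)) * Complex.I = ((Real.pi : ℂ) * Complex.I) * (x - y) from by ring]
  set A := Complex.exp (-((Real.pi : ℂ) * Complex.I) * (x - y)) with hA
  set B := Complex.exp (((Real.pi : ℂ) * Complex.I) * (x - y)) with hB
  have hAA : A * A = Complex.exp (-(2 * (Real.pi : ℂ) * Complex.I) * (x - y)) := by
    rw [hA, ← Complex.exp_add,
      show -((Real.pi : ℂ) * Complex.I) * (x - y) + -((Real.pi : ℂ) * Complex.I) * (x - y)
        = -(2 * (Real.pi : ℂ) * Complex.I) * (x - y) from by ring]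
  have hAB : A * B = 1 := by
    rw [hA, hB, ← Complex.exp_add,
      show -((Real.pi : ℂ) * Complex.I) * (x - y) + ((Real.pi : ℂ) * Complex.I) * (x - y)
        = 0 from by ring, Complex.exp_zero]
  have hII : Complex.I * Complex.I = -1 := Complex.I_mul_I
  linear_combination (Real.pi : ℂ) * hAA - (Real.pi : ℂ) * hAB
    + ((Real.pi : ℂ) * A * B - (Real.pi : ℂ) * A * A) * hII
end

section
/- Let x, y ∈ ℂ with Im(x) > 0 and Im(y) < 0, avoiding poles of Γ as needed. With Λ(x,y) = Γ(x+y)·e^y / (y^{x+y-1/2}·√(2π)) and (-y)^z = exp(z·(Log y + πi)) for Im(y) < 0, one has Λ(x, -y)·Λ(1-x, y) = (1 - e^{2πi(x-y)})^{-1}. -/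
open Complex

/-- `Λ(x,-y)` where for `Im y < 0` the power `(-y)^z` is interpreted as
`exp(z·(Log y + πi))`. -/
noncomputable def LamNegLower (x y : ℂ) : ℂ :=
  Complex.Gamma (x - y) * Complex.exp (-y) /
    (Complex.exp ((x - y - 1/2) * (Complex.log y + Real.pi * Complex.I)) *
      (Real.sqrt (2 * Real.pi) : ℂ))

/-- For `Im x > 0`, `Im y < 0`, away from poles of `Γ`:
`Λ(x,-y)·Λ(1-x,y) = (1 - e^{2πi(x-y)})⁻¹`. -/
theorem stmt2 (x y : ℂ) (hx : 0 < x.im) (hy : y.im < 0)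
    (h1 : ∀ n : ℕ, x - y ≠ -n) (h2 : ∀ n : ℕ, 1 - x + y ≠ -n) :
    LamNegLower x y * Lam (1 - x) y =
      (1 - Complex.exp ((2 * Real.pi * Complex.I) * (x - y)))⁻¹ := by
  have hyne : y ≠ 0 := by
    intro h; rw [h] at hy; simp at hy
  have hπ : (Real.pi : ℂ) ≠ 0 := by exact_mod_cast Real.pi_ne_zero
  have hc : (Real.sqrt (2 * Real.pi) : ℂ) ≠ 0 := by
    norm_cast
    positivity
  have hc2 : (Real.sqrt (2 * Real.pi) : ℂ) * (Real.sqrt (2 * Real.pi) : ℂ)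
      = 2 * (Real.pi : ℂ) := by
    norm_cast
    exact Real.mul_self_sqrt (by positivity)
  have hsint : ∀ k : ℤ, x - y ≠ (k : ℂ) := by
    intro k hk
    rcases lt_or_ge 0 k with h | h
    · apply h2 (k - 1).toNat
      have hcast : (((k - 1).toNat : ℕ) : ℂ) = (k : ℂ) - 1 := by
        have : ((k - 1).toNat : ℤ) = k - 1 := Int.toNat_of_nonneg (by omega)
        exact_mod_cast congrArg (fun z : ℤ => (z : ℂ)) this
      rw [hcast]
      rw [sub_eq_iff_eq_add] at hk
      rw [hk]; ring
    · apply h1 (-k).toNat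
      have hcast : (((-k).toNat : ℕ) : ℂ) = -(k : ℂ) := by
        have : ((-k).toNat : ℤ) = -k := Int.toNat_of_nonneg (by omega)
        exact_mod_cast congrArg (fun z : ℤ => (z : ℂ)) this
      rw [hcast, hk]; ring
  have hsin : Complex.sin ((Real.pi : ℂ) * (x - y)) ≠ 0 := by
    rw [Complex.sin_ne_zero_iff]
    intro k hk
    apply hsint k
    have := mul_left_cancel₀ hπ (by rw [hk]; ring : (Real.pi : ℂ) * (x - y) = (Real.pi : ℂ) * k)
    exact this
  have hexpne : ∀ z : ℂ, Complex.exp z ≠ 0 := Complex.exp_ne_zero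
  -- key trig identity
  have aux : 1 - Complex.exp ((2 * Real.pi * Complex.I) * (x - y)) =
      2 * Complex.sin ((Real.pi : ℂ) * (x - y)) *
        Complex.exp ((x - y - 1/2) * ((Real.pi : ℂ) * Complex.I)) := by
    have e1 : Complex.exp ((2 * Real.pi * Complex.I) * (x - y)) =
        Complex.exp ((Real.pi : ℂ) * (x - y) * Complex.I) *
        Complex.exp ((Real.pi : ℂ) * (x - y) * Complex.I) := by
      rw [← Complex.exp_add]; ring_nf
    have e2 : Complex.exp ((x - y - 1/2) * ((Real.pi : ℂ) * Complex.I)) =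
        Complex.exp ((Real.pi : ℂ) * (x - y) * Complex.I) *
        Complex.exp ((-(Real.pi / 2) : ℂ) * Complex.I) := by
      rw [← Complex.exp_add]
      congr 1
      push_cast
      ring
    have e3 : Complex.exp ((-(Real.pi / 2) : ℂ) * Complex.I) = -Complex.I := by
      rw [Complex.exp_mul_I]
      push_cast
      rw [Complex.cos_neg, Complex.sin_neg, Complex.cos_pi_div_two, Complex.sin_pi_div_two]
      ring
    have e4 : Complex.sin ((Real.pi : ℂ) * (x - y)) =
        (Complex.exp (-((Real.pi : ℂ) * (x - y) * Complex.I)) -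
          Complex.exp ((Real.pi : ℂ) * (x - y) * Complex.I)) * Complex.I / 2 := by
      rw [Complex.sin]
      ring_nf
    have e5 : Complex.exp (-((Real.pi : ℂ) * (x - y) * Complex.I)) *
        Complex.exp ((Real.pi : ℂ) * (x - y) * Complex.I) = 1 := by
      rw [← Complex.exp_add]; simp
    rw [e1, e2, e3, e4]
    set E := Complex.exp ((Real.pi : ℂ) * (x - y) * Complex.I)
    set F := Complex.exp (-((Real.pi : ℂ) * (x - y) * Complex.I))
    linear_combination (E * F - E * E) * Complex.I_sq - e5
  have hG : Complex.Gamma (x - y) * Complex.Gamma (1 - (x - y)) =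
      (Real.pi : ℂ) / Complex.sin ((Real.pi : ℂ) * (x - y)) :=
    Complex.Gamma_mul_Gamma_one_sub _
  unfold LamNegLower Lam
  rw [Complex.cpow_def_of_ne_zero hyne]
  rw [show (1 : ℂ) - x + y = 1 - (x - y) from by ring]
  rw [div_mul_div_comm]
  have num : Complex.Gamma (x - y) * Complex.exp (-y) *
      (Complex.Gamma (1 - (x - y)) * Complex.exp y)
      = (Real.pi : ℂ) / Complex.sin ((Real.pi : ℂ) * (x - y)) := by
    have hone : Complex.exp (-y) * Complex.exp y = 1 := by
      rw [← Complex.exp_add]; simp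
    calc Complex.Gamma (x - y) * Complex.exp (-y) *
          (Complex.Gamma (1 - (x - y)) * Complex.exp y)
        = Complex.Gamma (x - y) * Complex.Gamma (1 - (x - y)) *
          (Complex.exp (-y) * Complex.exp y) := by ring
      _ = (Real.pi : ℂ) / Complex.sin ((Real.pi : ℂ) * (x - y)) := by
          rw [hone, hG]; ring
  have den : Complex.exp ((x - y - 1/2) * (Complex.log y + Real.pi * Complex.I)) *
      (Real.sqrt (2 * Real.pi) : ℂ) *
      (Complex.exp (Complex.log y * (1 - (x - y) - 1/2)) *
        (Real.sqrt (2 * Real.pi) : ℂ))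
      = Complex.exp ((x - y - 1/2) * ((Real.pi : ℂ) * Complex.I)) *
        (2 * (Real.pi : ℂ)) := by
    calc Complex.exp ((x - y - 1/2) * (Complex.log y + Real.pi * Complex.I)) *
          (Real.sqrt (2 * Real.pi) : ℂ) *
          (Complex.exp (Complex.log y * (1 - (x - y) - 1/2)) *
            (Real.sqrt (2 * Real.pi) : ℂ))
        = Complex.exp ((x - y - 1/2) * (Complex.log y + Real.pi * Complex.I)) *
          Complex.exp (Complex.log y * (1 - (x - y) - 1/2)) *
          ((Real.sqrt (2 * Real.pi) : ℂ) * (Real.sqrt (2 * Real.pi) : ℂ)) := by ring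
      _ = Complex.exp ((x - y - 1/2) * ((Real.pi : ℂ) * Complex.I)) *
          (2 * (Real.pi : ℂ)) := by
          rw [← Complex.exp_add, hc2]
          congr 2
          ring
  rw [num, den, aux]
  field_simp
end
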